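/- As operators on F[t,t^{-1}], for every i ≥ 1: 0 = [t^2 d/dt,[t^2 d/dt,[t^2 d/dt,(d/dt)^i]]] + (i−1)(i−2)[t^4 d/dt, (d/dt)^i] + 2(i−1)[t^2 d/dt,[t^3 d/dt,(d/dt)^i]]. -/
import Mathlib


/- Operators on F[t,t⁻¹] modelled on ℤ →₀ F (basis element k ↔ t^k). -/

noncomputable section
variable (F : Type*) [Field F] [CharZero F]

/-- Multiplication by `t^i`. -/
def Tpow (i : ℤ) : Module.End F (ℤ →₀ F) :=
  Finsupp.lsum F fun k => Finsupp.lsingle (k + i)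

/-- The degree operator `D = t · d/dt`. -/
def Dop : Module.End F (ℤ →₀ F) :=
  Finsupp.lsum F fun k => (k : F) • Finsupp.lsingle k

/-- The derivative `d/dt`, with `d/dt (t^k) = k t^{k-1}`. -/
def ddt : Module.End F (ℤ →₀ F) :=
  Finsupp.lsum F fun k => (k : F) • Finsupp.lsingle (k - 1)

/-- The commutator of operators. -/
def br (A B : Module.End F (ℤ →₀ F)) : Module.End F (ℤ →₀ F) := A * B - B * A

lemma Tpow_single (m k : ℤ) (c : F) :
    Tpow F m (Finsupp.single k c) = Finsupp.single (k + m) c := by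
  rw [Tpow, Finsupp.lsum_single]; rfl

lemma ddt_single (k : ℤ) (c : F) :
    ddt F (Finsupp.single k c) = Finsupp.single (k - 1) ((k : F) * c) := by
  rw [ddt, Finsupp.lsum_single, LinearMap.smul_apply, Finsupp.lsingle_apply,
    Finsupp.smul_single, smul_eq_mul]

lemma ddt_pow_single (i : ℕ) (k : ℤ) (c : F) :
    (ddt F ^ i) (Finsupp.single k c)
      = Finsupp.single (k - i) ((∏ j ∈ Finset.range i, ((k : F) - j)) * c) := by
  induction i generalizing k c with
  | zero => simp
  | succ n ih =>
      rw [pow_succ', Module.End.mul_apply, ih, ddt_single, Finset.prod_range_succ]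
      congr 1
      · push_cast; ring
      · push_cast; ring


lemma key (i : ℕ) (x : F) :
    (x + 1 - i) * ∏ j ∈ Finset.range i, (x + 1 - j)
      = (x + 1) * ∏ j ∈ Finset.range i, (x - j) := by
  rw [mul_comm, ← Finset.prod_range_succ (fun j : ℕ => x + 1 - (j : F)) i,
    Finset.prod_range_succ' (fun j : ℕ => x + 1 - (j : F)) i]
  push_cast
  rw [sub_zero, mul_comm]
  exact congrArg _ (Finset.prod_congr rfl fun j _ => by ring)


/-- For every `i ≥ 1`:
`0 = [t²d/dt,[t²d/dt,[t²d/dt,(d/dt)^i]]] + (i−1)(i−2)[t⁴d/dt,(d/dt)^i]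
     + 2(i−1)[t²d/dt,[t³d/dt,(d/dt)^i]]`. -/
theorem bracket_identity_two (i : ℕ) (hi : 1 ≤ i) :
    (0 : Module.End F (ℤ →₀ F))
    = br F (Tpow F 2 * ddt F) (br F (Tpow F 2 * ddt F) (br F (Tpow F 2 * ddt F) (ddt F ^ i)))
      + (((i : F) - 1) * ((i : F) - 2)) • br F (Tpow F 4 * ddt F) (ddt F ^ i)
      + (2 * ((i : F) - 1)) • br F (Tpow F 2 * ddt F) (br F (Tpow F 3 * ddt F) (ddt F ^ i)) := by
  refine (Finsupp.lhom_ext fun k c => ?_).symm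
  simp only [br, LinearMap.add_apply, LinearMap.smul_apply, LinearMap.zero_apply,
    LinearMap.sub_apply, Module.End.mul_apply, map_sub, ddt_pow_single, Tpow_single, ddt_single,
    Finsupp.smul_single, smul_eq_mul, smul_sub]
  ring_nf
  simp only [← Finsupp.single_sub, ← Finsupp.single_add]
  rw [Finsupp.single_eq_zero]
  push_cast
  have e1 : ∏ j ∈ Finset.range i, ((k : F) + 1 - j) = ∏ j ∈ Finset.range i, (1 + (k : F) - j) :=
    Finset.prod_congr rfl fun j _ => by ring
  have e2 : ∏ j ∈ Finset.range i, ((k : F) + 1 + 1 - j) = ∏ j ∈ Finset.range i, (2 + (k : F) - j) :=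
    Finset.prod_congr rfl fun j _ => by ring
  have e2b : ∏ j ∈ Finset.range i, ((k : F) + 2 - j) = ∏ j ∈ Finset.range i, (2 + (k : F) - j) :=
    Finset.prod_congr rfl fun j _ => by ring
  have e3 : ∏ j ∈ Finset.range i, ((k : F) + 2 + 1 - j) = ∏ j ∈ Finset.range i, (3 + (k : F) - j) :=
    Finset.prod_congr rfl fun j _ => by ring
  have h1 := key F i (k : F)
  have h2 := key F i ((k : F) + 1)
  have h3 := key F i ((k : F) + 2)
  rw [e1] at h1
  rw [e2, e1] at h2
  rw [e3, e2b] at h3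
  linear_combination (-(k : F) * ((k : F) - i) * c) * h1 +
    (2 * (k : F) * ((k : F) + 1 - i) * c) * h2 + (-(k : F) * ((k : F) + 2 - i) * c) * h3
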